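/- arXiv:math/0408069 — 2 statements merged into one kernel-verified Lean document; each statement's English description precedes it below -/
import Mathlib

section
/- Let f ∈ ℚ[x] be a square-free polynomial of degree 5 or 6. Then there exist symmetric 3×3 matrices M₁, M₂, M₃ with rational entries such that f(x) = det(M₁ + x·M₂ + x²·M₃). -/
open Polynomial

/-- Every square-free polynomial `f ∈ ℚ[x]` of degree 5 or 6 can be written as
`det (M₁ + x M₂ + x² M₃)` for symmetric rational 3×3 matrices `M₁, M₂, M₃`. -/
theorem squarefree_quintic_sextic_is_det_of_symmetric_pencil
    (f : Polynomial ℚ) (hsf : Squarefree f)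
    (hdeg : f.natDegree = 5 ∨ f.natDegree = 6) :
    ∃ M₁ M₂ M₃ : Matrix (Fin 3) (Fin 3) ℚ,
      M₁.IsSymm ∧ M₂.IsSymm ∧ M₃.IsSymm ∧
      f = (Matrix.of fun i j =>
            Polynomial.C (M₁ i j) + Polynomial.C (M₂ i j) * Polynomial.X
              + Polynomial.C (M₃ i j) * Polynomial.X ^ 2).det := by
  have h7 : f.natDegree < 7 := by rcases hdeg with h | h <;> omega
  refine ⟨!![0, 0, 1; 0, -f.coeff 0, f.coeff 2 / 2; 1, f.coeff 2 / 2, -f.coeff 4],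
          !![0, 0, 0; 0, -f.coeff 1, f.coeff 3 / 2; 0, f.coeff 3 / 2, -f.coeff 5],
          !![0, 1, 0; 1, 0, 0; 0, 0, -f.coeff 6], ?_, ?_, ?_, ?_⟩
  · ext i j; fin_cases i <;> fin_cases j <;>
      simp [Matrix.transpose_apply, Matrix.vecHead, Matrix.vecTail]
  · ext i j; fin_cases i <;> fin_cases j <;>
      simp [Matrix.transpose_apply, Matrix.vecHead, Matrix.vecTail]
  · ext i j; fin_cases i <;> fin_cases j <;>
      simp [Matrix.transpose_apply, Matrix.vecHead, Matrix.vecTail]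
  · rw [Matrix.det_fin_three]
    simp only [Matrix.of_apply, Matrix.cons_val', Matrix.cons_val_zero, Matrix.cons_val_one,
      Matrix.head_cons, Matrix.empty_val', Matrix.cons_val_fin_one, Matrix.head_fin_const,
      Matrix.cons_val_two, Matrix.tail_cons, map_zero, map_one, map_neg]
    conv_lhs => rw [f.as_sum_range' 7 h7]
    simp only [Finset.sum_range_succ, Finset.sum_range_zero, ← Polynomial.C_mul_X_pow_eq_monomial]
    generalize hd2 : f.coeff 2 / 2 = d2
    generalize hd3 : f.coeff 3 / 2 = d3
    have e2 : f.coeff 2 = 2 * d2 := by rw [← hd2]; ring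
    have e3 : f.coeff 3 = 2 * d3 := by rw [← hd3]; ring
    rw [e2, e3]
    simp only [map_mul, map_ofNat]
    ring
end

section
/- Suppose the curve C : Q₁(u,v,w)Q₃(u,v,w) = Q₂(u,v,w)² over ℚ (with integral quadratic forms Q₁, Q₂, Q₃) is such that Q₁, Q₃ and Q₁Q₃ − Q₂² have no common nontrivial zero modulo any prime p ∉ S for a finite set of primes S. Then every rational point (u₀:v₀:w₀) ∈ C(ℚ) admits δ ∈ ℚ* with ord_p(δ) even for all p ∉ S, and r₀, s₀ ∈ ℚ, such that Q₁(u₀,v₀,w₀) = δr₀², Q₂(u₀,v₀,w₀) = δr₀s₀, Q₃(u₀,v₀,w₀) = δs₀². -/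
/-!
Scale the point to a primitive integral vector `y`, so that the three values become `q²A`,
`q²B`, `q²C` with `A, B, C ∈ ℤ` and `AC = B²`. If a prime `p ∉ S` divided both `A` and `C`,
then `y mod p`, which is nonzero by primitivity, would be a common zero of `Q₁`, `Q₃` and
`Q₁Q₃ − Q₂²`; so `p` divides at most one of `A`, `C`, and the valuation of a nonzero one among
them (say `A`) is `2 v_p(B)` or `0`. That integer is the twist:
`(A, B, C) = A • (1, B/A, (B/A)²)`. Both vanishing is excluded by taking any prime outside `S`.
-/

open MvPolynomial

theorem MvPolynomial.IsHomogeneous.eval_const_mul {σ R : Type*} [Fintype σ] [CommSemiring R]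
    {φ : MvPolynomial σ R} {n : ℕ} (hφ : φ.IsHomogeneous n) (c : R) (x : σ → R) :
    eval (fun i => c * x i) φ = c ^ n * eval x φ := by
  rw [eval_eq', eval_eq', Finset.mul_sum]
  refine Finset.sum_congr rfl fun d hd => ?_
  have hdeg : ∑ i, d i = n := by
    simpa [Finsupp.weight_apply, Finsupp.sum_fintype] using hφ (mem_support_iff.mp hd)
  simp_rw [mul_pow]
  rw [Finset.prod_mul_distrib, Finset.prod_pow_eq_pow_sum, hdeg]
  ring

theorem MvPolynomial.eval_intCast_map {σ R : Type*} [CommRing R] (y : σ → ℤ)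
    (φ : MvPolynomial σ ℤ) :
    eval (fun i => (y i : R)) (map (Int.castRingHom R) φ) = eval y φ := by
  rw [eval_map]
  exact (eval₂_comp (Int.castRingHom R) y φ).symm

theorem MvPolynomial.IsHomogeneous.aeval_const_mul_intCast {σ R : Type*} [Fintype σ] [CommRing R]
    {φ : MvPolynomial σ ℤ} {n : ℕ} (hφ : φ.IsHomogeneous n) (c : R) (y : σ → ℤ) :
    MvPolynomial.aeval (fun i => c * (y i : R)) φ = c ^ n * (eval y φ : R) := by
  rw [aeval_def, eval₂_eq_eval_map, algebraMap_int_eq,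
    IsHomogeneous.eval_const_mul (hφ.map (Int.castRingHom R)), eval_intCast_map]

theorem exists_primitive_intCast_mul {ι : Type*} [Fintype ι] (x : ι → ℚ) (hx : x ≠ 0) :
    ∃ q : ℚ, q ≠ 0 ∧ ∃ y : ι → ℤ, Finset.univ.gcd y = 1 ∧ x = fun i => q * y i := by
  obtain ⟨⟨b, hb⟩, hint⟩ := IsLocalization.exist_integer_multiples_of_finite (nonZeroDivisors ℤ) x
  choose z hz using hint
  have hb0 : (b : ℚ) ≠ 0 := by exact_mod_cast nonZeroDivisors.ne_zero hb
  obtain ⟨i₀, hi₀⟩ := Function.ne_iff.mp hx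
  obtain ⟨y, hzy, hy⟩ := Finset.extract_gcd z ⟨i₀, Finset.mem_univ _⟩
  have hg : ((Finset.univ.gcd z : ℤ) : ℚ) ≠ 0 := by
    refine Int.cast_ne_zero.mpr fun hg => hi₀ ?_
    have hz₀ := hz i₀
    rw [Finset.gcd_eq_zero_iff.mp hg i₀ (Finset.mem_univ _)] at hz₀
    simpa [hb0] using hz₀.symm
  refine ⟨Finset.univ.gcd z / b, div_ne_zero hg hb0, y, hy, funext fun i => ?_⟩
  have hzi : (b : ℚ) * x i = Finset.univ.gcd z * y i := by
    simpa [hzy i (Finset.mem_univ _)] using (hz i).symm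
  field_simp
  linear_combination hzi

theorem not_dvd_and_dvd_of_primitive {σ : Type*} [Fintype σ] {p : ℕ} (hp : p.Prime)
    {Q₁ Q₂ Q₃ : MvPolynomial σ ℤ}
    (hQ : ∀ x : σ → ZMod p,
      eval x (map (Int.castRingHom (ZMod p)) Q₁) = 0 →
      eval x (map (Int.castRingHom (ZMod p)) Q₃) = 0 →
      eval x (map (Int.castRingHom (ZMod p)) (Q₁ * Q₃ - Q₂ ^ 2)) = 0 → x = 0)
    {y : σ → ℤ} (hy : Finset.univ.gcd y = 1) (hrel : eval y Q₁ * eval y Q₃ = eval y Q₂ ^ 2) :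
    ¬((p : ℤ) ∣ eval y Q₁ ∧ (p : ℤ) ∣ eval y Q₃) := by
  rintro ⟨h₁, h₃⟩
  have hzero : (fun i => (y i : ZMod p)) = 0 := by
    refine hQ _ ?_ ?_ ?_ <;> rw [eval_intCast_map, ZMod.intCast_zmod_eq_zero_iff_dvd]
    · exact h₁
    · exact h₃
    · simp [hrel]
  have hdvd : (p : ℤ) ∣ Finset.univ.gcd y := Finset.dvd_gcd fun i _ =>
    (ZMod.intCast_zmod_eq_zero_iff_dvd _ _).mp (congrFun hzero i)
  rw [hy] at hdvd
  exact (Nat.prime_iff_prime_int.mp hp).not_dvd_one hdvd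

theorem even_padicValInt_of_mul_eq_sq {p : ℕ} [Fact p.Prime] {a b c : ℤ} (ha : a ≠ 0)
    (h : a * c = b ^ 2) (hcop : ¬((p : ℤ) ∣ a ∧ (p : ℤ) ∣ c)) : Even (padicValInt p a) := by
  by_cases hpa : (p : ℤ) ∣ a
  · have hpc : ¬(p : ℤ) ∣ c := fun hpc => hcop ⟨hpa, hpc⟩
    have hc : c ≠ 0 := by rintro rfl; exact hpc (dvd_zero _)
    have hb : b ≠ 0 := by rintro rfl; simp [ha, hc] at h
    have hval := congrArg (padicValInt p) h
    rw [padicValInt.mul ha hc, padicValInt.eq_zero_of_not_dvd hpc, pow_two,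
      padicValInt.mul hb hb] at hval
    exact ⟨padicValInt p b, by simpa using hval⟩
  · simp [padicValInt.eq_zero_of_not_dvd hpa]

/-- `(a, b, c) = δ • (r², r s, s²)` with `δ` representing a class of `ℚ(S,2)`. -/
def IsTwistedSquareTriple (S : Finset ℕ) (a b c : ℚ) : Prop :=
  ∃ δ : ℚ, δ ≠ 0 ∧ (∀ p : ℕ, p.Prime → p ∉ S → Even (padicValRat p δ)) ∧
    ∃ r s : ℚ, a = δ * r ^ 2 ∧ b = δ * (r * s) ∧ c = δ * s ^ 2

namespace IsTwistedSquareTriple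

variable {S : Finset ℕ} {a b c : ℚ}

theorem symm (h : IsTwistedSquareTriple S a b c) : IsTwistedSquareTriple S c b a := by
  obtain ⟨δ, hδ, hval, r, s, ha, hb, hc⟩ := h
  exact ⟨δ, hδ, hval, s, r, hc, by rw [hb, mul_comm r s], ha⟩

theorem sq_mul (q : ℚ) (h : IsTwistedSquareTriple S a b c) :
    IsTwistedSquareTriple S (q ^ 2 * a) (q ^ 2 * b) (q ^ 2 * c) := by
  obtain ⟨δ, hδ, hval, r, s, ha, hb, hc⟩ := h
  exact ⟨δ, hδ, hval, q * r, q * s, by rw [ha]; ring, by rw [hb]; ring, by rw [hc]; ring⟩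

theorem of_intCast {a b c : ℤ} (ha : a ≠ 0) (h : a * c = b ^ 2)
    (hcop : ∀ p : ℕ, p.Prime → p ∉ S → ¬((p : ℤ) ∣ a ∧ (p : ℤ) ∣ c)) :
    IsTwistedSquareTriple S a b c := by
  have ha' : (a : ℚ) ≠ 0 := Int.cast_ne_zero.mpr ha
  refine ⟨a, ha', fun p hp hpS => ?_, 1, b / a, by ring, by field_simp, ?_⟩
  · have : Fact p.Prime := ⟨hp⟩
    rw [padicValRat.of_int]
    exact_mod_cast even_padicValInt_of_mul_eq_sq ha h (hcop p hp hpS)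
  · have h' : (a : ℚ) * c = b ^ 2 := by exact_mod_cast h
    field_simp
    linear_combination h'

end IsTwistedSquareTriple

/-- Let `Q₁, Q₂, Q₃` be integral quadratic forms such that `Q₁`, `Q₃` and
`Q₁Q₃ − Q₂²` have no common nontrivial zero modulo any prime `p ∉ S` (`S` a finite set of
primes). Then every rational point of `C : Q₁Q₃ = Q₂²` admits `δ ∈ ℚ*` with even `p`-adic
valuation for all primes `p ∉ S`, and `r₀, s₀ ∈ ℚ`, with `Q₁ = δr₀²`, `Q₂ = δr₀s₀`,
`Q₃ = δs₀²` at that point. -/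
theorem descent_on_quartic (Q₁ Q₂ Q₃ : MvPolynomial (Fin 3) ℤ)
    (h1 : Q₁.IsHomogeneous 2) (h2 : Q₂.IsHomogeneous 2) (h3 : Q₃.IsHomogeneous 2)
    (S : Finset ℕ)
    (hS : ∀ p : ℕ, p.Prime → p ∉ S →
      ∀ x : Fin 3 → ZMod p,
        eval x (MvPolynomial.map (Int.castRingHom (ZMod p)) Q₁) = 0 →
        eval x (MvPolynomial.map (Int.castRingHom (ZMod p)) Q₃) = 0 →
        eval x (MvPolynomial.map (Int.castRingHom (ZMod p)) (Q₁ * Q₃ - Q₂ ^ 2)) = 0 →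
        x = 0) :
    ∀ u₀ v₀ w₀ : ℚ, ¬(u₀ = 0 ∧ v₀ = 0 ∧ w₀ = 0) →
      aeval ![u₀, v₀, w₀] (Q₁ * Q₃) = (aeval ![u₀, v₀, w₀] Q₂ : ℚ) ^ 2 →
      ∃ δ : ℚ, δ ≠ 0 ∧ (∀ p : ℕ, p.Prime → p ∉ S → Even (padicValRat p δ)) ∧
        ∃ r₀ s₀ : ℚ,
          aeval ![u₀, v₀, w₀] Q₁ = δ * r₀ ^ 2 ∧
          aeval ![u₀, v₀, w₀] Q₂ = δ * (r₀ * s₀) ∧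
          aeval ![u₀, v₀, w₀] Q₃ = δ * s₀ ^ 2 := by
  intro u₀ v₀ w₀ hnz hC
  have hx : ![u₀, v₀, w₀] ≠ 0 := fun h => hnz ⟨congrFun h 0, congrFun h 1, congrFun h 2⟩
  obtain ⟨q, hq, y, hy, hxy⟩ := exists_primitive_intCast_mul _ hx
  have hval : ∀ φ : MvPolynomial (Fin 3) ℤ, φ.IsHomogeneous 2 →
      aeval ![u₀, v₀, w₀] φ = q ^ 2 * eval y φ := fun φ hφ => by
    rw [hxy, IsHomogeneous.aeval_const_mul_intCast hφ]
  rw [map_mul, hval Q₁ h1, hval Q₂ h2, hval Q₃ h3] at hC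
  have hrel : eval y Q₁ * eval y Q₃ = eval y Q₂ ^ 2 := by
    have hrelQ : (eval y Q₁ : ℚ) * eval y Q₃ = (eval y Q₂ : ℚ) ^ 2 :=
      mul_left_cancel₀ (pow_ne_zero 4 hq) (by linear_combination hC)
    exact_mod_cast hrelQ
  have hcop : ∀ p : ℕ, p.Prime → p ∉ S → ¬((p : ℤ) ∣ eval y Q₁ ∧ (p : ℤ) ∣ eval y Q₃) :=
    fun p hp hpS => not_dvd_and_dvd_of_primitive hp (hS p hp hpS) hy hrel
  rw [hval Q₁ h1, hval Q₂ h2, hval Q₃ h3]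
  refine IsTwistedSquareTriple.sq_mul q ?_
  rcases ne_or_eq (eval y Q₁) 0 with hA | hA
  · exact .of_intCast hA hrel hcop
  · have hC₃ : eval y Q₃ ≠ 0 := fun hC₃ => by
      obtain ⟨p, hp, hpS⟩ := (Nat.infinite_setOfPred_prime.sdiff S.finite_toSet).nonempty
      exact hcop p hp hpS ⟨hA ▸ dvd_zero _, hC₃ ▸ dvd_zero _⟩
    exact (IsTwistedSquareTriple.of_intCast hC₃ (by rw [mul_comm, hrel])
      fun p hp hpS h => hcop p hp hpS h.symm).symm
end
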